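/- Let f : [−2,2] → [−2,2] be the piecewise linear map whose graph passes through the points (−2,2), (−3/2,−2), (−1,0), (−1/2,−2), (1/2,2), (1,0), (3/2,2), (2,−2). Then the set H = {0} ∪ {±4^{−n} : n ≥ 0} is closed, invariant (f(H) = H) and internally chain transitive, but H is not the ω-limit set of any point: there is no x ∈ [−2,2] with ω(x,f) = H. -/

import Mathlib

noncomputable def exMap (x : ℝ) : ℝ :=
  if x ≤ -(3 / 2) then -8 * x - 14
  else if x ≤ -1 then 4 * x + 4
  else if x ≤ -(1 / 2) then -4 * x - 4
  else if x ≤ 1 / 2 then 4 * x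
  else if x ≤ 1 then -4 * x + 4
  else if x ≤ 3 / 2 then 4 * x - 4
  else -8 * x + 14

def exSet : Set ℝ :=
  {0} ∪ {x | ∃ n : ℕ, x = (1 / 4 : ℝ) ^ n ∨ x = -((1 / 4 : ℝ) ^ n)}

def InternallyChainTransitive {X : Type*} [MetricSpace X] (f : X → X) (Λ : Set X) : Prop :=
  ∀ x ∈ Λ, ∀ y ∈ Λ, ∀ ε : ℝ, 0 < ε → ∃ m : ℕ, 1 ≤ m ∧ ∃ σ : ℕ → X,
    σ 0 = x ∧ σ m = y ∧ (∀ i ≤ m, σ i ∈ Λ) ∧ ∀ i < m, dist (f (σ i)) (σ (i + 1)) < ε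

noncomputable def omegaLimitSet {X : Type*} [MetricSpace X] (f : X → X) (x : X) : Set X :=
  ⋂ k : ℕ, closure ((fun n => f^[n] x) '' Set.Ici k)

/-! Chain transitivity: every point of `exSet` reaches `0` along its orbit, and every point
`±4⁻ⁿ` is reached exactly by the orbit of a point `±4⁻ⁿ⁻ᴺ` that is within `ε` of `exMap 0 = 0`,
so a single `ε`-jump at the fixed point `0` links any two points of `exSet`.

No ω-limit set: an orbit in `[-2, 2]` with ω-limit set `exSet` eventually stays in `(-3/2, 3/2)`
by compactness, and it enters `[0, ∞)` because it accumulates at `1`. As `exMap ≥ 0` on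
`[0, 3/2]`, it stays in `[0, ∞)` from then on and cannot accumulate at `-1`. -/

open Set Filter Topology Relation

theorem Relation.ReflTransGen.exists_seq {α : Type*} {r : α → α → Prop} {a b : α}
    (h : ReflTransGen r a b) :
    ∃ m : ℕ, ∃ σ : ℕ → α, σ 0 = a ∧ σ m = b ∧ ∀ i < m, r (σ i) (σ (i + 1)) := by
  induction h using ReflTransGen.head_induction_on with
  | refl => exact ⟨0, fun _ => b, rfl, rfl, by simp⟩
  | @head a c hac _ ih =>
    obtain ⟨m, σ, rfl, hm, hσ⟩ := ih
    refine ⟨m + 1, fun | 0 => a | i + 1 => σ i, rfl, hm, ?_⟩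
    rintro (_ | i) hi
    · exact hac
    · exact hσ i (by omega)

theorem Relation.TransGen.exists_seq {α : Type*} {r : α → α → Prop} {a b : α}
    (h : TransGen r a b) :
    ∃ m : ℕ, 1 ≤ m ∧ ∃ σ : ℕ → α, σ 0 = a ∧ σ m = b ∧ ∀ i < m, r (σ i) (σ (i + 1)) := by
  obtain ⟨c, hac, hcb⟩ := TransGen.head'_iff.1 h
  obtain ⟨m, σ, rfl, hm, hσ⟩ := hcb.exists_seq
  refine ⟨m + 1, by omega, fun | 0 => a | i + 1 => σ i, rfl, hm, ?_⟩
  rintro (_ | i) hi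
  · exact hac
  · exact hσ i (by omega)

theorem Function.iterate_eventually_mem_of_mapsTo_inter {α : Type*} {f : α → α} {x : α}
    {A B : Set α} (hf : MapsTo f (A ∩ B) A) (hB : ∀ᶠ n in atTop, f^[n] x ∈ B)
    (hA : ∃ᶠ n in atTop, f^[n] x ∈ A) : ∀ᶠ n in atTop, f^[n] x ∈ A := by
  obtain ⟨N, hN⟩ := eventually_atTop.1 hB
  obtain ⟨n₀, hn₀, hA₀⟩ := frequently_atTop.1 hA N
  refine eventually_atTop.2 ⟨n₀, fun n hn => ?_⟩
  induction n, hn using Nat.le_induction with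
  | base => exact hA₀
  | succ n hn ih =>
    rw [Function.iterate_succ_apply']
    exact hf ⟨ih, hN n (by omega)⟩

section MetricSpace

variable {X : Type*} [MetricSpace X]

def PseudoOrbitStep (f : X → X) (Λ : Set X) (ε : ℝ) (a b : X) : Prop :=
  b ∈ Λ ∧ dist (f a) b < ε

theorem internallyChainTransitive_of_transGen {f : X → X} {Λ : Set X}
    (h : ∀ x ∈ Λ, ∀ y ∈ Λ, ∀ ε > 0, TransGen (PseudoOrbitStep f Λ ε) x y) :
    InternallyChainTransitive f Λ := by
  intro x hx y hy ε hε
  obtain ⟨m, hm, σ, h0, hmy, hσ⟩ := (h x hx y hy ε hε).exists_seq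
  refine ⟨m, hm, σ, h0, hmy, ?_, fun i hi => (hσ i hi).2⟩
  rintro (_ | i) hi
  · exact h0 ▸ hx
  · exact (hσ i (by omega)).1

theorem reflTransGen_pseudoOrbitStep_iterate {f : X → X} {Λ : Set X} {ε : ℝ} {a : X}
    (hf : MapsTo f Λ Λ) (ha : a ∈ Λ) (hε : 0 < ε) (n : ℕ) :
    ReflTransGen (PseudoOrbitStep f Λ ε) a (f^[n] a) := by
  induction n with
  | zero => exact .refl
  | succ n ih =>
    refine ih.tail ?_
    rw [Function.iterate_succ_apply']
    exact ⟨hf (hf.iterate n ha), by simpa using hε⟩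

variable {f : X → X} {x : X}

theorem omegaLimitSet_eq_omegaLimit :
    omegaLimitSet f x = omegaLimit atTop (fun n y => f^[n] y) {x} := by
  rw [omegaLimit_def, atTop_basis.biInter_mem, omegaLimitSet]
  · simp [image2_singleton_right]
  · exact fun s t hst => closure_mono (image2_subset_right hst)

theorem frequently_iterate_mem_of_mem_omegaLimitSet {y : X} {U : Set X}
    (hy : y ∈ omegaLimitSet f x) (hU : U ∈ 𝓝 y) : ∃ᶠ n in atTop, f^[n] x ∈ U := by
  rw [omegaLimitSet_eq_omegaLimit, mem_omegaLimit_singleton_iff_mapClusterPt] at hy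
  exact mapClusterPt_iff_frequently.1 hy U hU

theorem eventually_iterate_mem_of_omegaLimitSet_subset {K U : Set X} (hK : IsCompact K)
    (hxK : ∀ n, f^[n] x ∈ K) (hU : IsOpen U) (hωU : omegaLimitSet f x ⊆ U) :
    ∀ᶠ n in atTop, f^[n] x ∈ U := by
  rw [omegaLimitSet_eq_omegaLimit] at hωU
  filter_upwards [eventually_mapsTo_of_isCompact_absorbing_of_isOpen_of_omegaLimit_subset _ _ _
    hK (.of_forall fun n => mapsTo_singleton.2 (hxK n)) hU hωU] with n hn
  exact hn rfl

theorem omegaLimitSet_subset_closure {A : Set X} (hA : ∀ᶠ n in atTop, f^[n] x ∈ A) :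
    omegaLimitSet f x ⊆ closure A := by
  obtain ⟨N, hN⟩ := eventually_atTop.1 hA
  exact (iInter_subset _ N).trans (closure_mono (image_subset_iff.2 hN))

end MetricSpace

theorem exMap_of_abs_le {x : ℝ} (hx : |x| ≤ 1 / 2) : exMap x = 4 * x := by
  obtain ⟨h₁, h₂⟩ := abs_le.1 hx
  unfold exMap
  split_ifs <;> linarith

theorem exMap_zero : exMap 0 = 0 := by
  simpa using exMap_of_abs_le (x := 0) (by norm_num)

theorem exMap_of_abs_eq_one {c : ℝ} (hc : |c| = 1) : exMap c = 0 := by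
  rcases (abs_eq zero_le_one).1 hc with rfl | rfl <;> norm_num [exMap]

theorem exMap_mul_quarter_pow_succ {c : ℝ} (hc : |c| ≤ 1) (n : ℕ) :
    exMap (c * (1 / 4) ^ (n + 1)) = c * (1 / 4) ^ n := by
  have hq : (1 / 4 : ℝ) ^ (n + 1) ≤ 1 / 4 :=
    pow_le_of_le_one (by norm_num) (by norm_num) n.succ_ne_zero
  rw [exMap_of_abs_le, pow_succ]
  · ring
  · calc |c * (1 / 4) ^ (n + 1)| = |c| * (1 / 4) ^ (n + 1) := by
          rw [abs_mul, abs_of_pos (by positivity : (0 : ℝ) < (1 / 4) ^ (n + 1))]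
      _ ≤ 1 * (1 / 4) := mul_le_mul hc hq (by positivity) zero_le_one
      _ ≤ 1 / 2 := by norm_num

theorem exMap_iterate_mul_quarter_pow {c : ℝ} (hc : |c| ≤ 1) (n k : ℕ) :
    exMap^[k] (c * (1 / 4) ^ (n + k)) = c * (1 / 4) ^ n := by
  induction k generalizing n with
  | zero => rfl
  | succ k ih =>
    rw [Function.iterate_succ_apply, ← add_assoc, exMap_mul_quarter_pow_succ hc, ih]

theorem mem_exSet_iff {x : ℝ} :
    x ∈ exSet ↔ x = 0 ∨ ∃ c : ℝ, |c| = 1 ∧ ∃ n : ℕ, x = c * (1 / 4) ^ n := by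
  constructor
  · rintro (h | ⟨n, rfl | rfl⟩)
    · exact .inl h
    · exact .inr ⟨1, abs_one, n, (one_mul _).symm⟩
    · exact .inr ⟨-1, by simp, n, (neg_one_mul _).symm⟩
  · rintro (h | ⟨c, hc, n, rfl⟩)
    · exact .inl h
    · rcases (abs_eq zero_le_one).1 hc with rfl | rfl
      · exact .inr ⟨n, .inl (one_mul _)⟩
      · exact .inr ⟨n, .inr (neg_one_mul _)⟩

theorem exSet_eq_abs_preimage :
    exSet = (|·|) ⁻¹' insert 0 (range fun n : ℕ => (1 / 4 : ℝ) ^ n) := by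
  ext x
  simp only [exSet, mem_union, mem_singleton_iff, mem_ofPred_eq, mem_preimage, mem_insert_iff,
    abs_eq_zero, mem_range, eq_comm (b := |x|),
    abs_eq (pow_nonneg (by norm_num : (0 : ℝ) ≤ 1 / 4) _)]

theorem isClosed_exSet : IsClosed exSet := by
  rw [exSet_eq_abs_preimage]
  exact (tendsto_pow_atTop_nhds_zero_of_lt_one (by norm_num) (by norm_num)).isCompact_insert_range
    |>.isClosed.preimage continuous_abs

theorem mapsTo_exMap_exSet : MapsTo exMap exSet exSet := by
  intro x hx
  rcases mem_exSet_iff.1 hx with rfl | ⟨c, hc, _ | n, rfl⟩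
  · exact mem_exSet_iff.2 (.inl exMap_zero)
  · exact mem_exSet_iff.2 (.inl (by simpa using exMap_of_abs_eq_one hc))
  · rw [exMap_mul_quarter_pow_succ hc.le]
    exact mem_exSet_iff.2 (.inr ⟨c, hc, n, rfl⟩)

theorem exMap_image_exSet : exMap '' exSet = exSet := by
  refine mapsTo_exMap_exSet.image_subset.antisymm fun x hx => ?_
  rcases mem_exSet_iff.1 hx with rfl | ⟨c, hc, n, rfl⟩
  · exact ⟨0, hx, exMap_zero⟩
  · exact ⟨c * (1 / 4) ^ (n + 1), mem_exSet_iff.2 (.inr ⟨c, hc, n + 1, rfl⟩),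
      exMap_mul_quarter_pow_succ hc.le n⟩

theorem zero_mem_exSet : (0 : ℝ) ∈ exSet := mem_exSet_iff.2 (.inl rfl)

theorem mul_quarter_pow_mem_exSet {c : ℝ} (hc : |c| = 1) (n : ℕ) : c * (1 / 4) ^ n ∈ exSet :=
  mem_exSet_iff.2 (.inr ⟨c, hc, n, rfl⟩)

theorem one_mem_exSet : (1 : ℝ) ∈ exSet := Or.inr ⟨0, .inl (pow_zero _).symm⟩

theorem neg_one_mem_exSet : (-1 : ℝ) ∈ exSet := Or.inr ⟨0, .inr (by rw [pow_zero])⟩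

theorem reflTransGen_pseudoOrbitStep_exSet_zero {ε x : ℝ} (hε : 0 < ε) (hx : x ∈ exSet) :
    ReflTransGen (PseudoOrbitStep exMap exSet ε) x 0 := by
  rcases mem_exSet_iff.1 hx with rfl | ⟨c, hc, n, rfl⟩
  · exact .refl
  · have h := reflTransGen_pseudoOrbitStep_iterate mapsTo_exMap_exSet hx hε (n + 1)
    have hn := exMap_iterate_mul_quarter_pow hc.le 0 n
    rw [zero_add, pow_zero, mul_one] at hn
    rwa [Function.iterate_succ_apply', hn, exMap_of_abs_eq_one hc] at h

theorem transGen_pseudoOrbitStep_exSet_zero_left {ε y : ℝ} (hε : 0 < ε) (hy : y ∈ exSet) :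
    TransGen (PseudoOrbitStep exMap exSet ε) 0 y := by
  rcases mem_exSet_iff.1 hy with rfl | ⟨c, hc, m, rfl⟩
  · exact .single ⟨zero_mem_exSet, by simpa [exMap_zero] using hε⟩
  obtain ⟨N, hN⟩ := exists_pow_lt_of_lt_one hε (by norm_num : (1 / 4 : ℝ) < 1)
  have hjump : PseudoOrbitStep exMap exSet ε 0 (c * (1 / 4) ^ (m + N)) := by
    refine ⟨mul_quarter_pow_mem_exSet hc _, ?_⟩
    calc dist (exMap 0) (c * (1 / 4) ^ (m + N)) = (1 / 4) ^ (m + N) := by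
          rw [exMap_zero, dist_zero_left, norm_mul, Real.norm_eq_abs, hc, one_mul,
            Real.norm_of_nonneg (by positivity)]
      _ ≤ (1 / 4) ^ N := pow_le_pow_of_le_one (by norm_num) (by norm_num) (by omega)
      _ < ε := hN
  have horbit := reflTransGen_pseudoOrbitStep_iterate mapsTo_exMap_exSet
    (mul_quarter_pow_mem_exSet hc (m + N)) hε N
  rw [exMap_iterate_mul_quarter_pow hc.le] at horbit
  exact .head' hjump horbit

theorem internallyChainTransitive_exSet : InternallyChainTransitive exMap exSet :=
  internallyChainTransitive_of_transGen fun _ hx _ hy _ hε =>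
    TransGen.trans_right (reflTransGen_pseudoOrbitStep_exSet_zero hε hx)
      (transGen_pseudoOrbitStep_exSet_zero_left hε hy)

theorem mapsTo_exMap_Icc : MapsTo exMap (Icc (-2) 2) (Icc (-2) 2) := by
  rintro x ⟨h₁, h₂⟩
  unfold exMap
  split_ifs <;> constructor <;> linarith

theorem mapsTo_exMap_Ici_inter_Iio : MapsTo exMap (Ici 0 ∩ Iio (3 / 2)) (Ici 0) := by
  rintro x ⟨h₀, h₁⟩
  simp only [mem_Ici, mem_Iio] at h₀ h₁ ⊢
  unfold exMap
  split_ifs <;> linarith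

theorem exSet_subset_Icc : exSet ⊆ Icc (-1) 1 := by
  intro x hx
  rcases mem_exSet_iff.1 hx with rfl | ⟨c, hc, n, rfl⟩
  · norm_num
  · rw [mem_Icc, ← abs_le, abs_mul, hc, one_mul, abs_of_nonneg (by positivity)]
    exact pow_le_one₀ (by norm_num) (by norm_num)

theorem not_exists_omegaLimitSet_eq_exSet :
    ¬ ∃ x ∈ Icc (-2 : ℝ) 2, omegaLimitSet exMap x = exSet := by
  rintro ⟨x, hx, hω⟩
  have hnear : ∀ᶠ n in atTop, exMap^[n] x ∈ Iio (3 / 2) :=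
    eventually_iterate_mem_of_omegaLimitSet_subset isCompact_Icc
      (fun n => mapsTo_exMap_Icc.iterate n hx) isOpen_Iio
      (hω ▸ exSet_subset_Icc.trans (Icc_subset_Iic_self.trans (Iic_subset_Iio.2 (by norm_num))))
  have hpos : ∃ᶠ n in atTop, exMap^[n] x ∈ Ici 0 :=
    frequently_iterate_mem_of_mem_omegaLimitSet (hω ▸ one_mem_exSet) (Ici_mem_nhds one_pos)
  have htrap := omegaLimitSet_subset_closure (Function.iterate_eventually_mem_of_mapsTo_inter
    mapsTo_exMap_Ici_inter_Iio hnear hpos)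
  rw [hω, closure_Ici] at htrap
  exact absurd (htrap neg_one_mem_exSet) (by norm_num)

theorem exSet_ict_not_omegaLimitSet :
    IsClosed exSet ∧ exMap '' exSet = exSet ∧
    InternallyChainTransitive exMap exSet ∧
    ¬ ∃ x ∈ Set.Icc (-2 : ℝ) 2, omegaLimitSet exMap x = exSet :=
  ⟨isClosed_exSet, exMap_image_exSet, internallyChainTransitive_exSet,
    not_exists_omegaLimitSet_eq_exSet⟩
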